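/- arXiv:math/0109131 — 5 statements merged into one kernel-verified Lean document; each statement's English description precedes it below -/
import Mathlib

section
/- For every ε ∈ (0, π/2), the zero set of F_ε(x₁,x₂,z) = cos²ε · cosh(x₁/cos ε) − sin²ε · cosh(z/sin ε) − cos x₂ is a regular level set: the gradient of F_ε does not vanish at any point where F_ε = 0. -/
/-!
The differential of `F_ε` at `(x₁, x₂, z)` is `(cos ε · sinh (x₁ / cos ε), sin x₂, -sin ε · sinh (z / sin ε))`.
It vanishes only when `x₁ = z = 0` and `cos x₂ = ±1`, and there `F_ε = cos 2ε ∓ 1`, which is nonzero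
because `0 < 2ε < π`.
-/

/-- The function `F_ε` whose zero set is Scherk's second surface. -/
noncomputable def scherkF (ε : ℝ) (p : ℝ × ℝ × ℝ) : ℝ :=
  (Real.cos ε) ^ 2 * Real.cosh (p.1 / Real.cos ε)
    - (Real.sin ε) ^ 2 * Real.cosh (p.2.2 / Real.sin ε) - Real.cos p.2.1

open Real ContinuousLinearMap

section LinearForm

variable {R : Type*} [CommSemiring R] [TopologicalSpace R] [ContinuousMul R] [ContinuousAdd R]

def tripleForm (a b c : R) : R × R × R →L[R] R :=
  a • fst R R (R × R) + b • (fst R R R).comp (snd R R (R × R))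
    + c • (snd R R R).comp (snd R R (R × R))

@[simp]
lemma tripleForm_apply (a b c : R) (v : R × R × R) :
    tripleForm a b c v = a * v.1 + b * v.2.1 + c * v.2.2 := rfl

lemma tripleForm_eq_zero_iff {a b c : R} : tripleForm a b c = 0 ↔ a = 0 ∧ b = 0 ∧ c = 0 := by
  refine ⟨fun h => ⟨?_, ?_, ?_⟩, fun ⟨ha, hb, hc⟩ => by ext <;> simp [ha, hb, hc]⟩
  · simpa using congrArg (· (1, 0, 0)) h
  · simpa using congrArg (· (0, 1, 0)) h
  · simpa using congrArg (· (0, 0, 1)) h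

end LinearForm

lemma hasDerivAt_sq_mul_cosh_div (a t : ℝ) :
    HasDerivAt (fun t => a ^ 2 * cosh (t / a)) (a * sinh (t / a)) t := by
  refine (((hasDerivAt_id' t).div_const a).cosh.const_mul (a ^ 2)).congr_deriv ?_
  rcases eq_or_ne a 0 with rfl | ha
  · simp
  · field_simp

lemma hasFDerivAt_scherkF (ε : ℝ) (p : ℝ × ℝ × ℝ) :
    HasFDerivAt (scherkF ε)
      (tripleForm (cos ε * sinh (p.1 / cos ε)) (sin p.2.1) (-(sin ε * sinh (p.2.2 / sin ε)))) p := by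
  have hsnd : HasFDerivAt (𝕜 := ℝ) (Prod.snd : ℝ × ℝ × ℝ → ℝ × ℝ) _ p := hasFDerivAt_snd
  have hx := (hasDerivAt_sq_mul_cosh_div (cos ε) p.1).comp_hasFDerivAt (𝕜 := ℝ) p
    hasFDerivAt_fst
  have hz := (hasDerivAt_sq_mul_cosh_div (sin ε) p.2.2).comp_hasFDerivAt (𝕜 := ℝ) p
    hsnd.snd
  have hy := (hasDerivAt_cos p.2.1).comp_hasFDerivAt (𝕜 := ℝ) p hsnd.fst
  refine ((hx.sub hz).sub hy).congr_fderiv ?_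
  ext <;> simp

lemma scherkF_on_axis (ε y : ℝ) : scherkF ε (0, y, 0) = cos (2 * ε) - cos y := by
  simp [scherkF, cos_two_mul']

lemma eq_zero_of_mul_sinh_div_eq_zero {a x : ℝ} (ha : a ≠ 0) (h : a * sinh (x / a) = 0) : x = 0 := by
  simpa [ha, sinh_eq_zero] using h

/-- For every `ε ∈ (0, π/2)`, `0` is a regular value of `F_ε`: the
differential of `F_ε` does not vanish at any point of the zero set of `F_ε`. -/
theorem scherk_stmt2 (ε : ℝ) (hε : ε ∈ Set.Ioo 0 (Real.pi / 2))
    (p : ℝ × ℝ × ℝ) (hp : scherkF ε p = 0) :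
    fderiv ℝ (scherkF ε) p ≠ 0 := by
  obtain ⟨hε0, hεπ⟩ := hε
  have hc : 0 < cos ε := cos_pos_of_mem_Ioo ⟨by linarith [pi_pos], hεπ⟩
  have hs : 0 < sin ε := sin_pos_of_pos_of_lt_pi hε0 (by linarith [pi_pos])
  rw [(hasFDerivAt_scherkF ε p).fderiv, Ne, tripleForm_eq_zero_iff]
  rintro ⟨hdx, hdy, hdz⟩
  obtain ⟨x, y, z⟩ := p
  obtain rfl : x = 0 := eq_zero_of_mul_sinh_div_eq_zero hc.ne' hdx
  obtain rfl : z = 0 := eq_zero_of_mul_sinh_div_eq_zero hs.ne' (neg_eq_zero.mp hdz)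
  rw [scherkF_on_axis, sub_eq_zero] at hp
  have hcos : cos (2 * ε) ^ 2 = 1 := by
    rw [hp, ← sin_sq_add_cos_sq y, show sin y = 0 from hdy]
    ring
  have h2ε : 0 < sin (2 * ε) := by rw [sin_two_mul]; positivity
  nlinarith [sin_sq_add_cos_sq (2 * ε)]
end

section
/- For every ε ∈ (0, π/2), the function F_ε(x₁,x₂,z) = cos²ε · cosh(x₁/cos ε) − sin²ε · cosh(z/sin ε) − cos x₂ satisfies div(∇F_ε/|∇F_ε|) = 0 at every point of its zero set; equivalently, |∇F_ε|² ΔF_ε = ∇²F_ε(∇F_ε, ∇F_ε) holds on {F_ε = 0}. -/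
/-- Partial derivative with respect to the first coordinate. -/
noncomputable def pd1 (f : ℝ × ℝ × ℝ → ℝ) (p : ℝ × ℝ × ℝ) : ℝ :=
  deriv (fun t => f (t, p.2.1, p.2.2)) p.1

/-- Partial derivative with respect to the second coordinate. -/
noncomputable def pd2 (f : ℝ × ℝ × ℝ → ℝ) (p : ℝ × ℝ × ℝ) : ℝ :=
  deriv (fun t => f (p.1, t, p.2.2)) p.2.1

/-- Partial derivative with respect to the third coordinate. -/
noncomputable def pd3 (f : ℝ × ℝ × ℝ → ℝ) (p : ℝ × ℝ × ℝ) : ℝ :=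
  deriv (fun t => f (p.1, p.2.1, t)) p.2.2

open Real

noncomputable def coordSum (f g h : ℝ → ℝ) (p : ℝ × ℝ × ℝ) : ℝ :=
  f p.1 + g p.2.1 + h p.2.2

section coordSum

variable (f g h : ℝ → ℝ)

@[simp]
lemma coordSum_apply (p : ℝ × ℝ × ℝ) : coordSum f g h p = f p.1 + g p.2.1 + h p.2.2 := rfl

@[simp]
lemma pd1_coordSum : pd1 (coordSum f g h) = coordSum (deriv f) 0 0 := by
  ext p
  simp [pd1, deriv_add_const]

@[simp]
lemma pd2_coordSum : pd2 (coordSum f g h) = coordSum 0 (deriv g) 0 := by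
  ext p
  simp [pd2, deriv_add_const, deriv_const_add]

@[simp]
lemma pd3_coordSum : pd3 (coordSum f g h) = coordSum 0 0 (deriv h) := by
  ext p
  simp [pd3, deriv_const_add]

end coordSum

lemma deriv_fun_neg {𝕜 F : Type*} [NontriviallyNormedField 𝕜] [NormedAddCommGroup F]
    [NormedSpace 𝕜 F] (f : 𝕜 → F) : deriv (fun x => -f x) = fun x => -deriv f x :=
  deriv.neg'

lemma deriv_sq_mul_cosh_div (a : ℝ) :
    deriv (fun x => a ^ 2 * cosh (x / a)) = fun x => a * sinh (x / a) := by
  ext x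
  rw [(((hasDerivAt_id' x).div_const a).cosh.const_mul (a ^ 2)).deriv]
  obtain rfl | ha := eq_or_ne a 0
  · simp
  · field_simp

lemma deriv_mul_sinh_div {a : ℝ} (ha : a ≠ 0) :
    deriv (fun x => a * sinh (x / a)) = fun x => cosh (x / a) := by
  ext x
  rw [(((hasDerivAt_id' x).div_const a).sinh.const_mul a).deriv]
  field_simp

lemma scherkF_eq_coordSum (ε : ℝ) :
    scherkF ε = coordSum (fun x => cos ε ^ 2 * cosh (x / cos ε)) (fun y => -cos y)
      (fun z => -(sin ε ^ 2 * cosh (z / sin ε))) := by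
  ext p
  simp only [scherkF, coordSum_apply]
  ring

/-- For every `ε ∈ (0, π/2)`, on the zero set of `F_ε` one has
`|∇F_ε|² ΔF_ε = ∇²F_ε(∇F_ε, ∇F_ε)`, i.e. `div(∇F_ε/|∇F_ε|) = 0` on `{F_ε = 0}`. -/
theorem scherk_stmt3 (ε : ℝ) (hε : ε ∈ Set.Ioo 0 (Real.pi / 2))
    (p : ℝ × ℝ × ℝ) (hp : scherkF ε p = 0) :
    ((pd1 (scherkF ε) p) ^ 2 + (pd2 (scherkF ε) p) ^ 2 + (pd3 (scherkF ε) p) ^ 2) *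
        (pd1 (pd1 (scherkF ε)) p + pd2 (pd2 (scherkF ε)) p + pd3 (pd3 (scherkF ε)) p)
      = pd1 (pd1 (scherkF ε)) p * pd1 (scherkF ε) p * pd1 (scherkF ε) p
        + pd2 (pd1 (scherkF ε)) p * pd1 (scherkF ε) p * pd2 (scherkF ε) p
        + pd3 (pd1 (scherkF ε)) p * pd1 (scherkF ε) p * pd3 (scherkF ε) p
        + pd1 (pd2 (scherkF ε)) p * pd2 (scherkF ε) p * pd1 (scherkF ε) p
        + pd2 (pd2 (scherkF ε)) p * pd2 (scherkF ε) p * pd2 (scherkF ε) p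
        + pd3 (pd2 (scherkF ε)) p * pd2 (scherkF ε) p * pd3 (scherkF ε) p
        + pd1 (pd3 (scherkF ε)) p * pd3 (scherkF ε) p * pd1 (scherkF ε) p
        + pd2 (pd3 (scherkF ε)) p * pd3 (scherkF ε) p * pd2 (scherkF ε) p
        + pd3 (pd3 (scherkF ε)) p * pd3 (scherkF ε) p * pd3 (scherkF ε) p := by
  have hc : cos ε ≠ 0 := (cos_pos_of_mem_Ioo ⟨by linarith [hε.1, pi_pos], hε.2⟩).ne'
  have hs : sin ε ≠ 0 := (sin_pos_of_pos_of_lt_pi hε.1 (by linarith [hε.2, pi_pos])).ne'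
  rw [scherkF_eq_coordSum] at hp ⊢
  simp only [pd1_coordSum, pd2_coordSum, pd3_coordSum, coordSum_apply, deriv_zero, Pi.zero_apply,
    deriv_fun_neg, Real.deriv_cos, neg_neg, Real.deriv_sin, deriv_sq_mul_cosh_div,
    deriv_mul_sinh_div hc, deriv_mul_sinh_div hs] at hp ⊢
  have hcs := sin_sq_add_cos_sq ε
  have h1 := cosh_sq (p.1 / cos ε)
  have h2 := sin_sq_add_cos_sq p.2.1
  have h3 := cosh_sq (p.2.2 / sin ε)
  set u := cosh (p.1 / cos ε)
  set v := cos p.2.1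
  set w := cosh (p.2.2 / sin ε)
  linear_combination (-(v - w) * cos ε ^ 2) * h1 + (u - w) * h2 + (-(u + v) * sin ε ^ 2) * h3
    + ((cos ε ^ 2 + sin ε ^ 2) * (1 - u * w) + v * (u - w)) * hp
    + (w - u + (u * w - 1) * (cos ε ^ 2 * u - sin ε ^ 2 * w)) * hcs
end

section
/- For n ≥ 3 and x₁ in a compact subset of ℝ² \ ({0} × 2πℤ), as ε → 0⁺ the function z_ε(x₁,x₂) = sin ε · acosh((tan ε)^{-2} cosh(x₁/cos ε) − (sin ε)^{-2} cos x₂) converges to 0; i.e., away from {0} × 2πℤ the Scherk surfaces S_ε converge to the plane z = 0 as ε → 0. -/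
/-- Inverse hyperbolic cosine. -/
noncomputable def arcosh (x : ℝ) : ℝ := Real.log (x + Real.sqrt (x ^ 2 - 1))

/-- The height function of the upper sheet of Scherk's surface `S_ε`. -/
noncomputable def scherkHeight (ε : ℝ) (p : ℝ × ℝ) : ℝ :=
  Real.sin ε *
    arcosh ((Real.tan ε ^ 2)⁻¹ * Real.cosh (p.1 / Real.cos ε)
      - (Real.sin ε ^ 2)⁻¹ * Real.cos p.2)

/-!
Write `z_ε = s · arcosh (N_ε / s²)` with `s = sin ε` and
`N_ε(x₁, x₂) = cos² ε · cosh (x₁ / cos ε) - cos x₂`. As `ε → 0`, `N_ε` converges uniformly on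
the compact set `K` to `cosh x₁ - cos x₂`, which is positive on `K` because `K` avoids
`{0} × 2πℤ`; hence eventually `a ≤ N_ε ≤ b` on `K` for constants `0 < a ≤ b`. Once `s² ≤ a`,
the bound `arcosh y ≤ log (2y)` gives `0 ≤ z_ε ≤ s log (2b) - 2 s log s`, which tends to `0`.
-/

open Filter Topology Set Real

lemma arcosh_eq_real_arcosh : _root_.arcosh = Real.arcosh := rfl

lemma Real.arcosh_le_log_two_mul {x : ℝ} (hx : 1 ≤ x) : Real.arcosh x ≤ log (2 * x) := by
  have hsqrt : √(x ^ 2 - 1) ≤ x := sqrt_le_iff.2 ⟨by linarith, by linarith⟩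
  exact log_le_log (by linarith [sqrt_nonneg (x ^ 2 - 1)]) (by linarith)

lemma mul_arcosh_div_sq_le {s a b : ℝ} (hs : 0 < s) (ha : s ^ 2 ≤ a) (hab : a ≤ b) :
    s * Real.arcosh (a / s ^ 2) ≤ s * log (2 * b) + 2 * negMulLog s := by
  have hs2 : 0 < s ^ 2 := by positivity
  have ha0 : 0 < a := hs2.trans_le ha
  have hb0 : 0 < b := ha0.trans_le hab
  calc s * Real.arcosh (a / s ^ 2) ≤ s * log (2 * (b / s ^ 2)) := by
        gcongr
        exact (Real.arcosh_le_log_two_mul ((one_le_div hs2).2 ha)).trans (by gcongr)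
    _ = s * log (2 * b) + 2 * negMulLog s := by
        rw [mul_div_assoc', log_div (by positivity) hs2.ne', log_pow, negMulLog]
        push_cast
        ring

lemma tendstoUniformlyOn_zero_of_nonneg_of_le {ι α : Type*} {l : Filter ι} {K : Set α}
    {F : ι → α → ℝ} {g : ι → ℝ} (hg : Tendsto g l (𝓝 0))
    (hF : ∀ᶠ i in l, ∀ x ∈ K, 0 ≤ F i x ∧ F i x ≤ g i) : TendstoUniformlyOn F 0 l K := by
  rw [Metric.tendstoUniformlyOn_iff]
  intro δ hδ
  filter_upwards [hF, hg (Iio_mem_nhds hδ)] with i hFi hgi x hx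
  rw [Pi.zero_apply, dist_zero_left, norm_of_nonneg (hFi x hx).1]
  exact (hFi x hx).2.trans_lt hgi

theorem tendstoUniformlyOn_mul_arcosh_div_sq {ι α : Type*} {l : Filter ι} {K : Set α}
    {s : ι → ℝ} {N : ι → α → ℝ} {a b : ℝ} (hs : Tendsto s l (𝓝[>] 0)) (ha : 0 < a)
    (hN : ∀ᶠ i in l, ∀ x ∈ K, N i x ∈ Icc a b) :
    TendstoUniformlyOn (fun i x => s i * Real.arcosh (N i x / s i ^ 2)) 0 l K := by
  have hs0 : Tendsto s l (𝓝 0) := hs.mono_right nhdsWithin_le_nhds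
  have hbound : Tendsto (fun i => s i * log (2 * b) + 2 * negMulLog (s i)) l (𝓝 0) := by
    simpa using
      (hs0.mul_const _).add (((continuous_negMulLog.tendsto 0).comp hs0).const_mul 2)
  have hsq : ∀ᶠ i in l, s i ^ 2 < a := by
    simpa using (hs0.pow 2).eventually (Iio_mem_nhds (by simpa using ha))
  refine tendstoUniformlyOn_zero_of_nonneg_of_le hbound ?_
  filter_upwards [hs self_mem_nhdsWithin, hsq, hN] with i (hpos : 0 < s i) hsq hN x hx
  obtain ⟨hax, hxb⟩ := hN x hx
  have hone : 1 ≤ N i x / s i ^ 2 := (one_le_div (by positivity)).2 (by linarith)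
  exact ⟨mul_nonneg hpos.le (Real.arcosh_nonneg hone), mul_arcosh_div_sq_le hpos (by linarith) hxb⟩

theorem TendstoUniformlyOn.exists_eventually_mem_Icc {ι α : Type*} [TopologicalSpace α]
    {l : Filter ι} {K : Set α} {F : ι → α → ℝ} {f : α → ℝ} (hF : TendstoUniformlyOn F f l K)
    (hK : IsCompact K) (hf : ContinuousOn f K) (hpos : ∀ x ∈ K, 0 < f x) :
    ∃ a b, 0 < a ∧ ∀ᶠ i in l, ∀ x ∈ K, F i x ∈ Icc a b := by
  obtain ⟨m, hm0, hm⟩ := hK.exists_forall_le' hf hpos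
  obtain ⟨M, hM⟩ := hK.bddAbove_image hf
  refine ⟨m / 2, M + m / 2, by linarith, ?_⟩
  filter_upwards [Metric.tendstoUniformlyOn_iff.1 hF (m / 2) (by linarith)] with i hi x hx
  have hdist := abs_lt.1 (hi x hx)
  have hfx := hM (mem_image_of_mem f hx)
  have := hm x hx
  constructor <;> linarith [hdist.1, hdist.2]

lemma Real.cos_lt_cosh {x y : ℝ} (h : ¬ (x = 0 ∧ ∃ k : ℤ, y = 2 * π * k)) :
    cos y < cosh x := by
  by_contra! hle
  have h1 := one_le_cosh x
  have h2 := cos_le_one y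
  refine h ⟨?_, ?_⟩
  · by_contra hx
    linarith [one_lt_cosh.2 hx]
  · obtain ⟨k, hk⟩ := (cos_eq_one_iff y).1 (by linarith)
    exact ⟨k, by rw [← hk]; ring⟩

lemma Real.tendsto_sin_nhdsGT_zero : Tendsto sin (𝓝[>] 0) (𝓝[>] 0) :=
  tendsto_nhdsWithin_of_tendsto_nhds_of_eventually_within _
    ((continuous_sin.tendsto' 0 0 sin_zero).mono_left nhdsWithin_le_nhds)
    (by filter_upwards [Ioo_mem_nhdsGT pi_pos] with ε hε using sin_pos_of_pos_of_lt_pi hε.1 hε.2)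

noncomputable def scherkNumerator (ε : ℝ) (p : ℝ × ℝ) : ℝ :=
  cos ε ^ 2 * cosh (p.1 / cos ε) - cos p.2

lemma scherkNumerator_zero : scherkNumerator 0 = fun p => cosh p.1 - cos p.2 := by
  ext p
  simp [scherkNumerator]

lemma scherkHeight_eq {ε : ℝ} (hs : sin ε ≠ 0) (p : ℝ × ℝ) :
    scherkHeight ε p = sin ε * Real.arcosh (scherkNumerator ε p / sin ε ^ 2) := by
  rw [scherkHeight, arcosh_eq_real_arcosh, scherkNumerator, tan_eq_sin_div_cos]
  congr 2
  field_simp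

lemma tendstoUniformlyOn_scherkNumerator {K : Set (ℝ × ℝ)} (hK : IsCompact K) :
    TendstoUniformlyOn scherkNumerator (scherkNumerator 0) (𝓝 0) K := by
  have hU : Icc (-1 : ℝ) 1 ∈ 𝓝 0 := Icc_mem_nhds (by norm_num) (by norm_num)
  have hcos : ∀ q ∈ Icc (-1 : ℝ) 1 ×ˢ K, cos q.1 ≠ 0 := fun q hq =>
    (cos_pos_of_mem_Ioo
      ⟨by linarith [hq.1.1, pi_gt_three], by linarith [hq.1.2, pi_gt_three]⟩).ne'
  have hcont : ContinuousOn (↿scherkNumerator) (Icc (-1) 1 ×ˢ K) := by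
    change ContinuousOn
      (fun q : ℝ × (ℝ × ℝ) => cos q.1 ^ 2 * cosh (q.2.1 / cos q.1) - cos q.2.2) _
    fun_prop (disch := assumption)
  have := ((isCompact_Icc.prod hK).uniformContinuousOn_of_continuous hcont).tendstoUniformlyOn
    (x := 0) (by norm_num)
  rwa [nhdsWithin_eq_nhds.2 hU] at this

/-- On any compact subset of `ℝ² \ ({0} × 2πℤ)`, the height
`z_ε = sin ε · acosh((tan ε)⁻² cosh(x₁/cos ε) − (sin ε)⁻² cos x₂)` of the Scherk
surface converges to `0` as `ε → 0⁺`; i.e. away from `{0} × 2πℤ` the surfaces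
`S_ε` converge to the hyperplane `z = 0`. -/
theorem scherk_stmt4 (K : Set (ℝ × ℝ)) (hK : IsCompact K)
    (hKaway : ∀ p ∈ K, ¬ (p.1 = 0 ∧ ∃ k : ℤ, p.2 = 2 * Real.pi * k)) :
    TendstoUniformlyOn (fun ε p => scherkHeight ε p) 0
      (nhdsWithin 0 (Set.Ioi (0 : ℝ))) K := by
  have hpos : ∀ p ∈ K, 0 < scherkNumerator 0 p := fun p hp => by
    simpa [scherkNumerator_zero] using cos_lt_cosh (hKaway p hp)
  have hcont : ContinuousOn (scherkNumerator 0) K := by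
    rw [scherkNumerator_zero]; fun_prop
  obtain ⟨a, b, ha, hN⟩ :=
    (tendstoUniformlyOn_scherkNumerator hK).exists_eventually_mem_Icc hK hcont hpos
  refine (tendstoUniformlyOn_mul_arcosh_div_sq tendsto_sin_nhdsGT_zero ha
    (hN.filter_mono nhdsWithin_le_nhds)).congr ?_
  filter_upwards [tendsto_sin_nhdsGT_zero self_mem_nhdsWithin] with ε (hs : 0 < sin ε) p _
  exact (scherkHeight_eq hs.ne' p).symm
end

section
/- For n ≥ 3, the function u describing the upper end of the unit n-catenoid as a graph over the hyperplane z = 0 satisfies u(x) = c_∞ − (1/(n−2)) r^{2−n} + O(r^{4−3n}) as r = |x| → ∞. -/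
open MeasureTheory

/-- The profile function `φ` of the unit `n`-catenoid: `φ(s)^{n-1} = cosh((n-1)s)`. -/
noncomputable def catPhi (n : ℕ) (s : ℝ) : ℝ :=
  Real.cosh (((n : ℝ) - 1) * s) ^ ((1 : ℝ) / ((n : ℝ) - 1))

/-- The height function `ψ(s) = ∫₀^s φ(t)^{2-n} dt` of the unit `n`-catenoid. -/
noncomputable def catPsi (n : ℕ) (s : ℝ) : ℝ :=
  ∫ t in (0 : ℝ)..s, catPhi n t ^ ((2 : ℝ) - n)

/-- The asymptotic height `c_∞ = lim_{s→∞} ψ(s) = ∫₀^∞ φ^{2-n}`. -/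
noncomputable def catCinf (n : ℕ) : ℝ :=
  ∫ t in Set.Ioi (0 : ℝ), catPhi n t ^ ((2 : ℝ) - n)

/-! With `a = n - 1` and `p = (2 - n) / (n - 1) < 0` we have `φ(t) ^ (2 - n) = cosh (a t) ^ p`, so
`c_∞ - ψ(s) = ∫_s^∞ cosh (a t) ^ p`. Since `cosh - sinh = exp (-·)`,
`cosh ^ p = sinh * cosh ^ (p - 1) + cosh ^ (p - 1) * exp (-·)`. The first summand is the derivative
of `cosh (a t) ^ p / (a p)` and produces the main term `φ(s) ^ (2 - n) / (n - 2)`; the second is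
`O(exp (a (p - 2) t))`, whose tail from `s` is `O(cosh (a s) ^ (p - 2)) = O(φ(s) ^ (4 - 3n))`. -/

open Real Set Filter Topology

lemma exp_div_two_le_cosh (x : ℝ) : exp x / 2 ≤ cosh x := by
  rw [cosh_eq]
  linarith [exp_pos (-x)]

lemma cosh_le_exp_of_nonneg {x : ℝ} (hx : 0 ≤ x) : cosh x ≤ exp x := by
  rw [cosh_eq]
  linarith [exp_le_exp.2 (show -x ≤ x by linarith)]

lemma cosh_rpow_le_exp {c : ℝ} (hc : c ≤ 0) (x : ℝ) : cosh x ^ c ≤ 2 ^ (-c) * exp (c * x) :=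
  calc cosh x ^ c ≤ (exp x / 2) ^ c :=
        rpow_le_rpow_of_nonpos (by positivity) (exp_div_two_le_cosh x) hc
    _ = 2 ^ (-c) * exp (c * x) := by
        rw [div_rpow (exp_pos _).le zero_le_two, ← exp_mul, rpow_neg zero_le_two, mul_comm x c,
          div_eq_inv_mul]

lemma exp_mul_le_cosh_rpow {c x : ℝ} (hc : c ≤ 0) (hx : 0 ≤ x) : exp (c * x) ≤ cosh x ^ c := by
  rw [mul_comm, exp_mul]
  exact rpow_le_rpow_of_nonpos (cosh_pos x) (cosh_le_exp_of_nonneg hx) hc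

lemma cosh_rpow_eq_exp_neg_add_sinh (x p : ℝ) :
    cosh x ^ p = cosh x ^ (p - 1) * exp (-x) + sinh x * cosh x ^ (p - 1) := by
  rw [← cosh_sub_sinh, rpow_sub_one (cosh_pos x).ne']
  field_simp
  ring

section CoshPowerTail

variable {a b p q : ℝ}

lemma cosh_mul_rpow_mul_exp_le (hq : q ≤ 0) (t : ℝ) :
    cosh (a * t) ^ q * exp (b * t) ≤ 2 ^ (-q) * exp ((a * q + b) * t) :=
  calc cosh (a * t) ^ q * exp (b * t) ≤ 2 ^ (-q) * exp (q * (a * t)) * exp (b * t) := by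
        gcongr
        exact cosh_rpow_le_exp hq _
    _ = 2 ^ (-q) * exp ((a * q + b) * t) := by
        rw [mul_assoc, ← exp_add]
        ring_nf

lemma integrableOn_cosh_mul_rpow_mul_exp_Ioi (hq : q ≤ 0) (hk : a * q + b < 0) (s : ℝ) :
    IntegrableOn (fun t => cosh (a * t) ^ q * exp (b * t)) (Ioi s) := by
  refine ((integrableOn_exp_mul_Ioi hk s).const_mul (2 ^ (-q))).mono' ?_ ?_
  · exact (((continuous_cosh.comp (continuous_const_mul a)).rpow_const
      fun _ => Or.inl (cosh_pos _).ne').mul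
        (continuous_exp.comp (continuous_const_mul b))).aestronglyMeasurable
  · filter_upwards with t
    rw [Real.norm_of_nonneg (by positivity)]
    exact cosh_mul_rpow_mul_exp_le hq t

lemma integral_cosh_mul_rpow_mul_exp_Ioi_le (hq : q ≤ 0) (hk : a * q + b < 0) (s : ℝ) :
    ∫ t in Ioi s, cosh (a * t) ^ q * exp (b * t)
      ≤ 2 ^ (-q) * exp ((a * q + b) * s) / -(a * q + b) :=
  calc ∫ t in Ioi s, cosh (a * t) ^ q * exp (b * t)
        ≤ ∫ t in Ioi s, 2 ^ (-q) * exp ((a * q + b) * t) :=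
          setIntegral_mono (integrableOn_cosh_mul_rpow_mul_exp_Ioi hq hk s)
            ((integrableOn_exp_mul_Ioi hk s).const_mul _) (cosh_mul_rpow_mul_exp_le hq)
    _ = 2 ^ (-q) * exp ((a * q + b) * s) / -(a * q + b) := by
        rw [integral_const_mul, integral_exp_mul_Ioi hk, neg_div, div_neg]
        ring

lemma integrableOn_cosh_mul_rpow_Ioi (ha : 0 < a) (hp : p < 0) (s : ℝ) :
    IntegrableOn (fun t => cosh (a * t) ^ p) (Ioi s) := by
  simpa using integrableOn_cosh_mul_rpow_mul_exp_Ioi (b := 0) hp.le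
    (by simpa using mul_neg_of_pos_of_neg ha hp) s

lemma tendsto_cosh_mul_rpow_atTop (ha : 0 < a) (hp : p < 0) :
    Tendsto (fun t => cosh (a * t) ^ p) atTop (𝓝 0) := by
  have hcosh : Tendsto (fun t => cosh (a * t)) atTop atTop :=
    tendsto_atTop_mono (fun t => exp_div_two_le_cosh (a * t))
      ((tendsto_exp_atTop.comp (tendsto_id.const_mul_atTop ha)).atTop_div_const two_pos)
  simpa only [neg_neg, Function.comp_def] using (tendsto_rpow_neg_atTop (neg_pos.2 hp)).comp hcosh

lemma hasDerivAt_cosh_mul_rpow (a p t : ℝ) :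
    HasDerivAt (fun t => cosh (a * t) ^ p) (a * p * (sinh (a * t) * cosh (a * t) ^ (p - 1))) t := by
  convert (((hasDerivAt_id' t).const_mul a).cosh).rpow_const (p := p)
    (Or.inl (cosh_pos _).ne') using 1
  ring

lemma integral_Ioi_cosh_mul_rpow (ha : 0 < a) (hp : p < 0) (s : ℝ) :
    ∫ t in Ioi s, cosh (a * t) ^ p
      = -1 / (a * p) * cosh (a * s) ^ p + ∫ t in Ioi s, cosh (a * t) ^ (p - 1) * exp (-a * t) := by
  have hp0 : p ≠ 0 := hp.ne
  have hf := integrableOn_cosh_mul_rpow_Ioi ha hp s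
  have hg : IntegrableOn (fun t => cosh (a * t) ^ (p - 1) * exp (-a * t)) (Ioi s) :=
    integrableOn_cosh_mul_rpow_mul_exp_Ioi (by linarith) (by nlinarith) s
  have hderiv : ∀ t ∈ Ici s, HasDerivAt (fun t => cosh (a * t) ^ p / (a * p))
      (cosh (a * t) ^ p - cosh (a * t) ^ (p - 1) * exp (-a * t)) t := by
    intro t _
    refine ((hasDerivAt_cosh_mul_rpow a p t).div_const (a * p)).congr_deriv ?_
    rw [cosh_rpow_eq_exp_neg_add_sinh (a * t) p, neg_mul]
    field_simp
    ring
  have hftc := integral_Ioi_of_hasDerivAt_of_tendsto' hderiv (hf.sub hg)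
    ((tendsto_cosh_mul_rpow_atTop ha hp).div_const _)
  rw [integral_sub hf hg, zero_div] at hftc
  rw [neg_div, neg_mul, one_div_mul_eq_div]
  linarith

lemma abs_integral_Ioi_cosh_mul_rpow_sub_le (ha : 0 < a) (hp : p < 0) {s : ℝ} (hs : 0 ≤ s) :
    |(∫ t in Ioi s, cosh (a * t) ^ p) - -1 / (a * p) * cosh (a * s) ^ p|
      ≤ 2 ^ (1 - p) / (a * (2 - p)) * cosh (a * s) ^ (p - 2) := by
  have hrem_nonneg : 0 ≤ ∫ t in Ioi s, cosh (a * t) ^ (p - 1) * exp (-a * t) :=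
    setIntegral_nonneg measurableSet_Ioi fun t _ => by positivity
  have hrem := integral_cosh_mul_rpow_mul_exp_Ioi_le (a := a) (b := -a) (q := p - 1)
    (by linarith) (by nlinarith) s
  have hdecay : exp ((a * (p - 1) + -a) * s) ≤ cosh (a * s) ^ (p - 2) := by
    rw [show (a * (p - 1) + -a) * s = (p - 2) * (a * s) by ring]
    exact exp_mul_le_cosh_rpow (by linarith) (by positivity)
  rw [integral_Ioi_cosh_mul_rpow ha hp s, add_sub_cancel_left, abs_of_nonneg hrem_nonneg]
  calc ∫ t in Ioi s, cosh (a * t) ^ (p - 1) * exp (-a * t)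
      ≤ 2 ^ (-(p - 1)) * exp ((a * (p - 1) + -a) * s) / -(a * (p - 1) + -a) := hrem
    _ ≤ 2 ^ (-(p - 1)) * cosh (a * s) ^ (p - 2) / -(a * (p - 1) + -a) := by
        gcongr
        nlinarith
    _ = 2 ^ (1 - p) / (a * (2 - p)) * cosh (a * s) ^ (p - 2) := by
        rw [neg_sub, show -(a * (p - 1) + -a) = a * (2 - p) by ring]
        ring

end CoshPowerTail

lemma catPhi_rpow (n : ℕ) (t e : ℝ) :
    catPhi n t ^ e = cosh (((n : ℝ) - 1) * t) ^ (e / ((n : ℝ) - 1)) := by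
  rw [catPhi, ← rpow_mul (cosh_pos _).le, one_div_mul_eq_div]

lemma catCinf_sub_catPsi {n : ℕ} (hn : 2 < n) (s : ℝ) :
    catCinf n - catPsi n s
      = ∫ t in Ioi s, cosh (((n : ℝ) - 1) * t) ^ (((2 : ℝ) - n) / ((n : ℝ) - 1)) := by
  have hn' : (2 : ℝ) < n := by exact_mod_cast hn
  have hint := integrableOn_cosh_mul_rpow_Ioi (a := (n : ℝ) - 1) (p := ((2 : ℝ) - n) / ((n : ℝ) - 1))
    (by linarith) (div_neg_of_neg_of_pos (by linarith) (by linarith))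
  simp only [catCinf, catPsi, catPhi_rpow]
  rw [← intervalIntegral.integral_Ioi_sub_Ioi' (hint 0) (hint s)]
  ring

/-- the upper end of the unit `n`-catenoid, which is the graph of
`u = ψ ∘ s(r)` over the hyperplane `z = 0` with `r = φ(s)`, satisfies
`u = c_∞ − (1/(n−2)) r^{2−n} + O(r^{4−3n})` as `r → ∞`; equivalently,
`ψ(s) = c_∞ − (1/(n−2)) φ(s)^{2−n} + O(φ(s)^{4−3n})` as `s → ∞`. -/
theorem scherk_stmt5 (n : ℕ) (hn : 3 ≤ n) :
    ∃ C > (0 : ℝ), ∃ s₀ : ℝ, ∀ s ≥ s₀,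
      |catPsi n s - (catCinf n - (1 / ((n : ℝ) - 2)) * catPhi n s ^ ((2 : ℝ) - n))|
        ≤ C * catPhi n s ^ ((4 : ℝ) - 3 * n) := by
  have hn' : (3 : ℝ) ≤ n := by exact_mod_cast hn
  have ha : (0 : ℝ) < n - 1 := by linarith
  have hp : ((2 : ℝ) - n) / (n - 1) < 0 := div_neg_of_neg_of_pos (by linarith) ha
  refine ⟨2 ^ (1 - ((2 : ℝ) - n) / (n - 1)) / ((n - 1) * (2 - (2 - n) / (n - 1))), div_pos (by positivity) (mul_pos ha (by linarith)), 0, fun s hs => ?_⟩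
  have hexp : ((4 : ℝ) - 3 * n) / (n - 1) = (2 - n) / (n - 1) - 2 := by
    field_simp
    ring
  have hcoef : -1 / ((n - 1) * ((2 - n) / (n - 1))) = 1 / ((n : ℝ) - 2) := by
    rw [mul_div_cancel₀ _ ha.ne', neg_div, ← div_neg, neg_sub]
  simp only [catPhi_rpow, hexp]
  rw [← abs_neg, neg_sub, sub_sub, add_comm, ← sub_sub, catCinf_sub_catPsi hn, ← hcoef]
  exact abs_integral_Ioi_cosh_mul_rpow_sub_le ha hp hs
end

section
/- For n ≥ 3, define coordinates (x̃₁, x̃₂, z̃) = (1/(2 sin ε))(x₁, x₂, z) on Scherk's surface F_ε = 0. Then along the rescaled surfaces, x̃₁² + x̃₂² = cosh²(z̃) + O(ε²) uniformly on compact sets; i.e., for every compact K ⊂ ℝ³ there is C > 0 such that all points of ε^{-1}·{F_ε = 0} ∩ K (coordinates (x̃₁,x̃₂,z̃) with |x̃ᵢ|, |z̃| ≤ R) satisfy |x̃₁² + x̃₂² − cosh² z̃| ≤ C ε². -/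
/-!
Write `s = sin ε`, `c = cos ε`, `t = tan ε`. By the double-angle formulas, `F_ε(2s·a, 2s·b, 2s·z) = 0`
expresses `a² + b² − cosh² z` as `c²` times the second-order Taylor remainder of `cosh` at `2ta` plus
that of `cos` at `2sb`, all divided by `2s²`. The fourth-order Taylor bounds make this
`O(t² a⁴ + s² b⁴) = O(ε²)` once `ε` is small compared with the size of `K`; for the remaining `ε`,
which are bounded below, the left-hand side is simply bounded on `K`.
-/

open Real

lemma Real.cosh_bound {x : ℝ} (hx : |x| ≤ 1) :
    |cosh x - (1 + x ^ 2 / 2)| ≤ |x| ^ 4 * (5 / 96) := by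
  have h := Complex.cos_bound (x := x * Complex.I) (by simpa using hx)
  have hreal : Complex.cos (x * Complex.I) - (1 - (x * Complex.I) ^ 2 / 2)
      = ((cosh x - (1 + x ^ 2 / 2) : ℝ) : ℂ) := by
    push_cast
    rw [Complex.cos_mul_I, mul_pow, Complex.I_sq]
    ring
  rw [hreal, Complex.norm_real, Real.norm_eq_abs, norm_mul, Complex.norm_I, mul_one,
    Complex.norm_real, Real.norm_eq_abs] at h
  exact h

lemma Real.tan_le_two_mul {x : ℝ} (h0 : 0 ≤ x) (h : x ≤ π / 3) : tan x ≤ 2 * x := by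
  have hcos : 1 / 2 ≤ cos x := cos_pi_div_three ▸
    cos_le_cos_of_nonneg_of_le_pi h0 (by linarith [pi_pos]) h
  rw [tan_eq_sin_div_cos, div_le_iff₀ (by linarith)]
  nlinarith [sin_le h0]

lemma sq_add_sq_sub_cosh_sq_of_scherkF_eq_zero {ε a b z : ℝ} (hs : sin ε ≠ 0) (hc : cos ε ≠ 0)
    (hF : scherkF ε (2 * sin ε * a, 2 * sin ε * b, 2 * sin ε * z) = 0) :
    a ^ 2 + b ^ 2 - cosh z ^ 2 =
      (cos ε ^ 2 * (1 + (2 * tan ε * a) ^ 2 / 2 - cosh (2 * tan ε * a))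
        + (cos (2 * sin ε * b) - (1 - (2 * sin ε * b) ^ 2 / 2))) / (2 * sin ε ^ 2) := by
  have ht : tan ε * cos ε = sin ε := by rw [tan_eq_sin_div_cos]; field_simp
  have hx : 2 * sin ε * a / cos ε = 2 * tan ε * a := by rw [← ht]; field_simp
  have hz : 2 * sin ε * z / sin ε = 2 * z := by field_simp
  simp only [scherkF, hx, hz, cosh_two_mul] at hF
  rw [eq_div_iff (by positivity)]
  linear_combination hF - sin ε ^ 2 * cosh_sq z - sin_sq_add_cos_sq ε
    - 2 * a ^ 2 * (tan ε * cos ε + sin ε) * ht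

lemma abs_sq_add_sq_sub_cosh_sq_le_of_scherkF_eq_zero {ε a b z : ℝ} (hs : sin ε ≠ 0)
    (hc : cos ε ≠ 0) (hF : scherkF ε (2 * sin ε * a, 2 * sin ε * b, 2 * sin ε * z) = 0)
    (ha : |2 * tan ε * a| ≤ 1) (hb : |2 * sin ε * b| ≤ 1) :
    |a ^ 2 + b ^ 2 - cosh z ^ 2| ≤ 5 / 12 * (tan ε ^ 2 * a ^ 4 + sin ε ^ 2 * b ^ 4) := by
  have ht : tan ε * cos ε = sin ε := by rw [tan_eq_sin_div_cos]; field_simp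
  have hcosh := cosh_bound ha
  rw [abs_sub_comm] at hcosh
  have hcos := cos_bound hb
  rw [sq_add_sq_sub_cosh_sq_of_scherkF_eq_zero hs hc hF, abs_div,
    abs_of_pos (by positivity : (0 : ℝ) < 2 * sin ε ^ 2), div_le_iff₀ (by positivity)]
  calc _ ≤ cos ε ^ 2 * |1 + (2 * tan ε * a) ^ 2 / 2 - cosh (2 * tan ε * a)|
        + |cos (2 * sin ε * b) - (1 - (2 * sin ε * b) ^ 2 / 2)| := by
        grw [abs_add_le, abs_mul, abs_of_nonneg (sq_nonneg (cos ε))]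
    _ ≤ cos ε ^ 2 * (|2 * tan ε * a| ^ 4 * (5 / 96)) + |2 * sin ε * b| ^ 4 * (5 / 96) := by
        gcongr
    _ = _ := by
        simp only [Even.pow_abs ⟨2, rfl⟩]
        linear_combination (5 / 6 * a ^ 4 * tan ε ^ 2 * (tan ε * cos ε + sin ε)) * ht

lemma abs_sq_add_sq_sub_cosh_sq_le_of_scherkF_eq_zero_of_small {ε R a b z : ℝ} (hε : 0 < ε)
    (hεπ : ε ≤ π / 3) (hεR : 4 * ε * R ≤ 1) (ha : |a| ≤ R) (hb : |b| ≤ R)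
    (hF : scherkF ε (2 * sin ε * a, 2 * sin ε * b, 2 * sin ε * z) = 0) :
    |a ^ 2 + b ^ 2 - cosh z ^ 2| ≤ 3 * R ^ 4 * ε ^ 2 := by
  have hπ := pi_pos
  have hs : 0 < sin ε := sin_pos_of_pos_of_lt_pi hε (by linarith)
  have hsε : sin ε ≤ ε := sin_le hε.le
  have hc : 0 < cos ε := cos_pos_of_mem_Ioo ⟨by linarith, by linarith⟩
  have ht : 0 ≤ tan ε := tan_nonneg_of_nonneg_of_le_pi_div_two hε.le (by linarith)
  have htε : tan ε ≤ 2 * ε := tan_le_two_mul hε.le hεπ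
  have hR : 0 ≤ R := (abs_nonneg a).trans ha
  have ha4 : a ^ 4 ≤ R ^ 4 := by rw [← Even.pow_abs ⟨2, rfl⟩]; gcongr
  have hb4 : b ^ 4 ≤ R ^ 4 := by rw [← Even.pow_abs ⟨2, rfl⟩]; gcongr
  have ha' : |2 * tan ε * a| ≤ 1 := by
    rw [abs_mul, abs_of_nonneg (by positivity)]
    calc 2 * tan ε * |a| ≤ 2 * (2 * ε) * R := by gcongr
      _ ≤ 1 := by linarith
  have hb' : |2 * sin ε * b| ≤ 1 := by
    rw [abs_mul, abs_of_nonneg (by positivity)]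
    calc 2 * sin ε * |b| ≤ 2 * ε * R := by gcongr
      _ ≤ 1 := by nlinarith
  calc _ ≤ 5 / 12 * (tan ε ^ 2 * a ^ 4 + sin ε ^ 2 * b ^ 4) :=
        abs_sq_add_sq_sub_cosh_sq_le_of_scherkF_eq_zero hs.ne' hc.ne' hF ha' hb'
    _ ≤ 5 / 12 * ((2 * ε) ^ 2 * R ^ 4 + ε ^ 2 * R ^ 4) := by gcongr
    _ ≤ 3 * R ^ 4 * ε ^ 2 := by nlinarith [pow_nonneg hR 4, sq_nonneg ε]

lemma abs_sq_add_sq_sub_cosh_sq_le {R a b z : ℝ} (ha : |a| ≤ R) (hb : |b| ≤ R) (hz : |z| ≤ R) :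
    |a ^ 2 + b ^ 2 - cosh z ^ 2| ≤ 2 * R ^ 2 + cosh R ^ 2 := by
  have hcosh : cosh z ≤ cosh R := cosh_le_cosh.2 (hz.trans (le_abs_self R))
  have ha2 : a ^ 2 ≤ R ^ 2 := sq_le_sq' (abs_le.1 ha).1 (abs_le.1 ha).2
  have hb2 : b ^ 2 ≤ R ^ 2 := sq_le_sq' (abs_le.1 hb).1 (abs_le.1 hb).2
  rw [abs_le]
  constructor <;> nlinarith [cosh_pos z, sq_nonneg a, sq_nonneg b]

lemma le_add_div_sq_mul_sq {x M C ε ε₀ : ℝ} (hx : 0 ≤ x) (hε₀ : 0 < ε₀) (hC : 0 ≤ C)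
    (hM : x ≤ M) (hsmall : ε < ε₀ → x ≤ C * ε ^ 2) : x ≤ (C + M / ε₀ ^ 2) * ε ^ 2 := by
  have hM0 : 0 ≤ M := hx.trans hM
  have hMε : 0 ≤ M / ε₀ ^ 2 * ε ^ 2 := by positivity
  rcases lt_or_ge ε ε₀ with hε | hε
  · nlinarith [hsmall hε]
  · calc x ≤ M / ε₀ ^ 2 * ε₀ ^ 2 := by rwa [div_mul_cancel₀ _ (by positivity)]
      _ ≤ M / ε₀ ^ 2 * ε ^ 2 := by gcongr
      _ ≤ (C + M / ε₀ ^ 2) * ε ^ 2 := by nlinarith [sq_nonneg ε]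

lemma abs_coords_le_of_norm_le {p : ℝ × ℝ × ℝ} {R : ℝ} (h : ‖p‖ ≤ R) :
    |p.1| ≤ R ∧ |p.2.1| ≤ R ∧ |p.2.2| ≤ R :=
  ⟨(norm_fst_le p).trans h, ((norm_fst_le p.2).trans (norm_snd_le p)).trans h,
    ((norm_snd_le p.2).trans (norm_snd_le p)).trans h⟩

/-- in rescaled coordinates `(x̃₁, x̃₂, z̃) = (x₁, x₂, z)/(2 sin ε)`,
the Scherk surfaces satisfy `x̃₁² + x̃₂² = cosh² z̃ + O(ε²)` uniformly on compact
sets: for every compact `K ⊂ ℝ³` there is `C > 0` such that every point of `K`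
whose rescaling lies on `{F_ε = 0}` satisfies `|x̃₁² + x̃₂² − cosh² z̃| ≤ C ε²`. -/
theorem scherk_stmt18 (K : Set (ℝ × ℝ × ℝ)) (hK : IsCompact K) :
    ∃ C > (0 : ℝ), ∀ ε ∈ Set.Ioo (0 : ℝ) (Real.pi / 2), ∀ p ∈ K,
      scherkF ε (2 * Real.sin ε * p.1, 2 * Real.sin ε * p.2.1,
        2 * Real.sin ε * p.2.2) = 0 →
      |p.1 ^ 2 + p.2.1 ^ 2 - Real.cosh p.2.2 ^ 2| ≤ C * ε ^ 2 := by
  obtain ⟨R, hR, hK⟩ := hK.isBounded.exists_pos_norm_le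
  set ε₀ := min (π / 3) (1 / (4 * R))
  have hε₀ : 0 < ε₀ := lt_min (by positivity) (by positivity)
  refine ⟨3 * R ^ 4 + (2 * R ^ 2 + cosh R ^ 2) / ε₀ ^ 2, by positivity, ?_⟩
  rintro ε ⟨hε, -⟩ p hp hF
  obtain ⟨ha, hb, hz⟩ := abs_coords_le_of_norm_le (hK p hp)
  refine le_add_div_sq_mul_sq (abs_nonneg _) hε₀ (by positivity)
    (abs_sq_add_sq_sub_cosh_sq_le ha hb hz) fun hsmall => ?_
  obtain ⟨hεπ, hεR⟩ := lt_min_iff.1 hsmall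
  rw [lt_div_iff₀ (by positivity)] at hεR
  exact abs_sq_add_sq_sub_cosh_sq_le_of_scherkF_eq_zero_of_small hε hεπ.le (by linarith) ha hb hF
end
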